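/- For finite undirected multigraphs (say, with vertex and edge sets given by finite subsets of ℕ), define nested conditions over a multigraph X inductively: true_X is a condition over X; if f : X → A is an injective homomorphism and c_A a condition over A, then ∃(f, c_A) is a condition over X; if c_X is a condition over X so is ¬c_X; if c_X and c_X' are conditions over X so is c_X ∧ c_X'. Satisfaction by an injective homomorphism h : X → Z is defined recursively: h ⊨ true_X always; h ⊨ ∃(f, c_A) iff there is an injective homomorphism g : A → Z with g ∘ f = h and g ⊨ c_A; h ⊨ ¬c_X iff not h ⊨ c_X; h ⊨ c_X ∧ c_X' iff h ⊨ c_X and h ⊨ c_X'. Then the Shift operation exists: for every condition c_X over X and every injective homomorphism y : X → Y, there exists a condition c' over Y such that for every finite undirected multigraph Z and every injective homomorphism g : Y → Z, one has g ⊨ c' if and only if g ∘ y ⊨ c_X. -/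

import Mathlib

/-- A finite undirected multigraph: a finite vertex set, a finite edge set, and an
incidence map assigning to each edge its unordered pair of endpoints (loops allowed). -/
structure MG where
  V : Type
  E : Type
  finV : Finite V
  finE : Finite E
  inc : E → Sym2 V

/-- A homomorphism of finite undirected multigraphs: a pair of maps on vertices and edges
compatible with the incidence maps. -/
structure MG.Hom (G H : MG) where
  vmap : G.V → H.V
  emap : G.E → H.E
  comm : ∀ e, H.inc (emap e) = Sym2.map vmap (G.inc e)

/-- A homomorphism is injective if both its components are injective. -/
def MG.Hom.Injective {G H : MG} (φ : G.Hom H) : Prop :=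
  Function.Injective φ.vmap ∧ Function.Injective φ.emap

/-- A homomorphism is surjective if both its components are surjective. -/
def MG.Hom.Surjective {G H : MG} (φ : G.Hom H) : Prop :=
  Function.Surjective φ.vmap ∧ Function.Surjective φ.emap

/-- A homomorphism is an isomorphism if both its components are bijective. -/
def MG.Hom.IsIso {G H : MG} (φ : G.Hom H) : Prop :=
  Function.Bijective φ.vmap ∧ Function.Bijective φ.emap

/-- Composition of homomorphisms of multigraphs. -/
def MG.Hom.comp {G H K : MG} (ψ : H.Hom K) (φ : G.Hom H) : G.Hom K where
  vmap := ψ.vmap ∘ φ.vmap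
  emap := ψ.emap ∘ φ.emap
  comm := by
    intro e
    simp only [Function.comp_apply, ψ.comm, φ.comm, Sym2.map_map]

/-- Nested conditions over a finite undirected multigraph `X`: `true`, existential
conditions `∃(f, c_A)` along injective homomorphisms `f : X → A`, negation, and
conjunction. -/
inductive MG.Cond : MG → Type 2 where
  | tru (X : MG) : MG.Cond X
  | ex {X A : MG} (f : X.Hom A) (hf : f.Injective) (c : MG.Cond A) : MG.Cond X
  | not {X : MG} (c : MG.Cond X) : MG.Cond X
  | and {X : MG} (c c' : MG.Cond X) : MG.Cond X

/-- Satisfaction of a condition over `X` by a homomorphism `h : X → Z`: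
`h ⊨ true` always; `h ⊨ ∃(f, c_A)` iff there is an injective `g : A → Z` with
`g ∘ f = h` and `g ⊨ c_A`; negation and conjunction are interpreted classically. -/
def MG.Sat : {X : MG} → MG.Cond X → {Z : MG} → (h : X.Hom Z) → Prop
  | _, .tru _, _, _ => True
  | _, .ex f _ c, _, h => ∃ g, g.Injective ∧ g.comp f = h ∧ MG.Sat c g
  | _, .not c, _, h => ¬ MG.Sat c h
  | _, .and c c', _, h => MG.Sat c h ∧ MG.Sat c' h

/-!
`Shift` is defined by recursion on the condition; only `∃(f, c_A)` needs an idea. Given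
`y : X → Y`, every injective `k : A → Z` with `k ∘ f = g ∘ y` factors through one of the
finitely many ways of gluing `A` onto `Y` along `X`: identify the vertices and edges of `A`
with those of `Y` having the same image in `Z`, and add the rest of `A` disjointly. Hence
`Shift(y, ∃(f, c_A))` is the disjunction, over all such gluings `Y → E ← A`, of
`∃(Y → E, Shift(A → E, c_A))`.
-/

namespace PEquiv

variable {α β γ : Type*}

instance [Finite α] [Finite β] : Finite (α ≃. β) :=
  Finite.of_injective _ DFunLike.coe_injective

noncomputable def pullback {g : β → γ} {k : α → γ} (hg : g.Injective) (hk : k.Injective) :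
    α ≃. β where
  toFun a := Function.partialInv g (k a)
  invFun b := Function.partialInv k (g b)
  inv a b := by rw [hk.isPartialInv, hg.isPartialInv, eq_comm]

theorem pullback_eq_some {g : β → γ} {k : α → γ} (hg : g.Injective) (hk : k.Injective)
    {a : α} {b : β} : pullback hg hk a = some b ↔ g b = k a :=
  hg.isPartialInv _ _

def toSumCompl (σ : α ≃. β) (a : α) : β ⊕ {a // σ a = none} :=
  match h : σ a with
  | some b => .inl b
  | none => .inr ⟨a, h⟩

theorem toSumCompl_of_eq_some {σ : α ≃. β} {a : α} {b : β} (h : σ a = some b) :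
    σ.toSumCompl a = .inl b := by
  unfold toSumCompl
  split <;> simp_all

theorem toSumCompl_of_eq_none {σ : α ≃. β} {a : α} (h : σ a = none) :
    σ.toSumCompl a = .inr ⟨a, h⟩ := by
  unfold toSumCompl
  split <;> simp_all

theorem toSumCompl_injective (σ : α ≃. β) : σ.toSumCompl.Injective := by
  intro a a' h
  cases ha : σ a with
  | none =>
    cases ha' : σ a' with
    | none => simpa [toSumCompl_of_eq_none, ha, ha'] using h
    | some b' => simp [toSumCompl_of_eq_none ha, toSumCompl_of_eq_some ha'] at h
  | some b =>
    cases ha' : σ a' with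
    | none => simp [toSumCompl_of_eq_some ha, toSumCompl_of_eq_none ha'] at h
    | some b' =>
      rw [toSumCompl_of_eq_some ha, toSumCompl_of_eq_some ha', Sum.inl.injEq] at h
      exact σ.inj ha (h ▸ ha')

variable {g : β → γ} {k : α → γ} (hg : g.Injective) (hk : k.Injective)

theorem sumElim_comp_pullback_toSumCompl :
    Sum.elim g (k ∘ Subtype.val) ∘ (pullback hg hk).toSumCompl = k := by
  funext a
  cases h : pullback hg hk a with
  | none => simp [toSumCompl_of_eq_none h]
  | some b => simpa [toSumCompl_of_eq_some h] using (pullback_eq_some hg hk).1 h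

theorem sumElim_pullback_injective :
    (Sum.elim g (k ∘ Subtype.val) : β ⊕ {a // pullback hg hk a = none} → γ).Injective :=
  hg.sumElim (hk.comp Subtype.val_injective) fun b a hba =>
    Option.some_ne_none b (((pullback_eq_some hg hk).2 hba).symm.trans a.2)

end PEquiv

namespace MG

theorem Hom.ext {G H : MG} {φ ψ : G.Hom H} (hv : φ.vmap = ψ.vmap) (he : φ.emap = ψ.emap) :
    φ = ψ := by
  cases φ; cases ψ; simp_all

theorem Hom.comp_assoc {G H K L : MG} (χ : K.Hom L) (ψ : H.Hom K) (φ : G.Hom H) :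
    (χ.comp ψ).comp φ = χ.comp (ψ.comp φ) :=
  Hom.ext rfl rfl

theorem Hom.Injective.comp {G H K : MG} {ψ : H.Hom K} {φ : G.Hom H} (hψ : ψ.Injective)
    (hφ : φ.Injective) : (ψ.comp φ).Injective :=
  ⟨hψ.1.comp hφ.1, hψ.2.comp hφ.2⟩

namespace Cond

def or {X : MG} (c c' : Cond X) : Cond X := .not (.and (.not c) (.not c'))

def any {X : MG} : List (Cond X) → Cond X
  | [] => .not (.tru X)
  | c :: l => c.or (any l)

noncomputable def iOr {X : MG} {ι : Type*} [Finite ι] (c : ι → Cond X) : Cond X :=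
  letI := Fintype.ofFinite ι
  any (Finset.univ.toList.map c)

theorem sat_or {X Z : MG} (c c' : Cond X) (h : X.Hom Z) :
    Sat (c.or c') h ↔ Sat c h ∨ Sat c' h := by
  simp only [or, Sat]
  tauto

theorem sat_any {X Z : MG} (l : List (Cond X)) (h : X.Hom Z) :
    Sat (any l) h ↔ ∃ c ∈ l, Sat c h := by
  induction l with
  | nil => simp [any, Sat]
  | cons c l ih => simp [any, sat_or, ih]

theorem sat_iOr {X Z : MG} {ι : Type*} [Finite ι] (c : ι → Cond X) (h : X.Hom Z) :
    Sat (iOr c) h ↔ ∃ i, Sat (c i) h := by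
  simp [iOr, sat_any]

end Cond

/-- A way of gluing `A` onto `Y` along `f : X → A` and `y : X → Y`: which vertices and edges
of `A` are identified with ones of `Y`. -/
structure Overlap {X A Y : MG} (f : X.Hom A) (y : X.Hom Y) where
  vmatch : A.V ≃. Y.V
  ematch : A.E ≃. Y.E
  vmatch_comm : ∀ x, vmatch (f.vmap x) = some (y.vmap x)
  ematch_comm : ∀ x, ematch (f.emap x) = some (y.emap x)
  inc_match : ∀ e u, ematch e = some u →
    Sym2.map vmatch.toSumCompl (A.inc e) = Sym2.map Sum.inl (Y.inc u)

namespace Overlap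

variable {X A Y : MG} {f : X.Hom A} {y : X.Hom Y}

instance : Finite (Overlap f y) := by
  have := A.finV; have := A.finE; have := Y.finV; have := Y.finE
  refine Finite.of_injective (fun o : Overlap f y => (o.vmatch, o.ematch)) ?_
  rintro ⟨⟩ ⟨⟩ h
  cases h
  rfl

variable (o : Overlap f y)

def graph : MG where
  V := Y.V ⊕ {a // o.vmatch a = none}
  E := Y.E ⊕ {e // o.ematch e = none}
  finV := by have := Y.finV; have := A.finV; infer_instance
  finE := by have := Y.finE; have := A.finE; infer_instance
  inc := Sum.elim (Sym2.map Sum.inl ∘ Y.inc) fun e => Sym2.map o.vmatch.toSumCompl (A.inc e.1)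

def inl : Y.Hom o.graph where
  vmap := Sum.inl
  emap := Sum.inl
  comm _ := rfl

def inr : A.Hom o.graph where
  vmap := o.vmatch.toSumCompl
  emap := o.ematch.toSumCompl
  comm e := by
    cases h : o.ematch e with
    | none => rw [PEquiv.toSumCompl_of_eq_none h]; rfl
    | some u => rw [PEquiv.toSumCompl_of_eq_some h]; exact (o.inc_match e u h).symm

theorem inl_injective : o.inl.Injective :=
  ⟨Sum.inl_injective, Sum.inl_injective⟩

theorem inr_injective : o.inr.Injective :=
  ⟨o.vmatch.toSumCompl_injective, o.ematch.toSumCompl_injective⟩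

theorem inr_comp : o.inr.comp f = o.inl.comp y :=
  Hom.ext (funext fun x => PEquiv.toSumCompl_of_eq_some (o.vmatch_comm x))
    (funext fun x => PEquiv.toSumCompl_of_eq_some (o.ematch_comm x))

section Cospan

variable {Z : MG} {g : Y.Hom Z} {k : A.Hom Z} (hg : g.Injective) (hk : k.Injective)
  (hkf : k.comp f = g.comp y)

noncomputable def ofCospan : Overlap f y where
  vmatch := PEquiv.pullback hg.1 hk.1
  ematch := PEquiv.pullback hg.2 hk.2
  vmatch_comm x := (PEquiv.pullback_eq_some _ _).2 (congrFun (congrArg Hom.vmap hkf) x).symm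
  ematch_comm x := (PEquiv.pullback_eq_some _ _).2 (congrFun (congrArg Hom.emap hkf) x).symm
  inc_match e u h := by
    apply Sym2.map.injective (PEquiv.sumElim_pullback_injective hg.1 hk.1)
    rw [Sym2.map_map, Sym2.map_map, PEquiv.sumElim_comp_pullback_toSumCompl, ← k.comm,
      ← (PEquiv.pullback_eq_some hg.2 hk.2).1 h]
    exact g.comm u

noncomputable def cospanLift : (ofCospan hg hk hkf).graph.Hom Z where
  vmap := Sum.elim g.vmap (k.vmap ∘ Subtype.val)
  emap := Sum.elim g.emap (k.emap ∘ Subtype.val)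
  comm
    | .inl u => by
      change _ = Sym2.map _ (Sym2.map Sum.inl _)
      rw [Sym2.map_map]
      exact g.comm u
    | .inr e => (k.comm e).trans <| .trans
      (congrArg (Sym2.map · (A.inc e.1)) (PEquiv.sumElim_comp_pullback_toSumCompl hg.1 hk.1).symm)
      (Sym2.map_map _).symm

theorem cospanLift_injective : (cospanLift hg hk hkf).Injective :=
  ⟨PEquiv.sumElim_pullback_injective hg.1 hk.1, PEquiv.sumElim_pullback_injective hg.2 hk.2⟩

theorem cospanLift_comp_inl : (cospanLift hg hk hkf).comp (ofCospan hg hk hkf).inl = g :=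
  Hom.ext rfl rfl

theorem cospanLift_comp_inr : (cospanLift hg hk hkf).comp (ofCospan hg hk hkf).inr = k :=
  Hom.ext (PEquiv.sumElim_comp_pullback_toSumCompl hg.1 hk.1)
    (PEquiv.sumElim_comp_pullback_toSumCompl hg.2 hk.2)

end Cospan

end Overlap

namespace Cond

noncomputable def shift : {X : MG} → Cond X → {Y : MG} → X.Hom Y → Cond Y
  | _, .tru _, Y, _ => .tru Y
  | _, .ex f _ c, _, y => iOr fun o : Overlap f y => .ex o.inl o.inl_injective (c.shift o.inr)
  | _, .not c, _, y => .not (c.shift y)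
  | _, .and c c', _, y => .and (c.shift y) (c'.shift y)

theorem sat_shift {X : MG} (c : Cond X) {Y Z : MG} (y : X.Hom Y) {g : Y.Hom Z}
    (hg : g.Injective) : Sat (c.shift y) g ↔ Sat c (g.comp y) := by
  induction c generalizing Y Z with
  | tru => simp only [shift, Sat]
  | not c ih => exact not_congr (ih y hg)
  | and c c' ih ih' => exact and_congr (ih y hg) (ih' y hg)
  | ex f _ c ih =>
    simp only [shift, sat_iOr, Sat]
    constructor
    · rintro ⟨o, q, hq, hq_inl, hqc⟩
      refine ⟨q.comp o.inr, hq.comp o.inr_injective, ?_, (ih o.inr hq).1 hqc⟩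
      rw [Hom.comp_assoc, o.inr_comp, ← Hom.comp_assoc, hq_inl]
    · rintro ⟨k, hk, hkf, hkc⟩
      refine ⟨Overlap.ofCospan hg hk hkf, _, Overlap.cospanLift_injective hg hk hkf,
        Overlap.cospanLift_comp_inl hg hk hkf, ?_⟩
      rwa [ih _ (Overlap.cospanLift_injective hg hk hkf), Overlap.cospanLift_comp_inr]

end Cond

end MG

theorem mg_shift_exists_general (X Y : MG) (c : MG.Cond X) (y : X.Hom Y) :
    ∃ c' : MG.Cond Y, ∀ (Z : MG) (g : Y.Hom Z), g.Injective →
      (MG.Sat c' g ↔ MG.Sat c (g.comp y)) :=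
  ⟨c.shift y, fun _ _ hg => c.sat_shift y hg⟩

/-- **Existence of the Shift operation for uGraph.** For every condition `c` over `X`
and every injective homomorphism `y : X → Y` of finite undirected multigraphs, there is
a condition `c'` over `Y` such that for every multigraph `Z` and every injective
homomorphism `g : Y → Z`, `g ⊨ c'` iff `g ∘ y ⊨ c`. -/
theorem mg_shift_exists (X Y : MG) (c : MG.Cond X) (y : X.Hom Y) (hy : y.Injective) :
    ∃ c' : MG.Cond Y, ∀ (Z : MG) (g : Y.Hom Z), g.Injective →
      (MG.Sat c' g ↔ MG.Sat c (g.comp y)) :=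
  mg_shift_exists_general X Y c y
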